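/- A connected simple graph is not a complete multipartite graph if and only if it contains P_4, the paw graph G_1 (a triangle with one pendant edge), or the disjoint union of two copies of P_2 as an induced subgraph. -/

import Mathlib

/-- A graph is complete multipartite: vertices can be labelled so that two
vertices are adjacent iff their labels differ. -/
def IsCompleteMultipartite {V : Type} (G : SimpleGraph V) : Prop :=
  ∃ (ι : Type) (p : V → ι), ∀ u v : V, G.Adj u v ↔ p u ≠ p v

/-- G contains an induced copy of H. -/
def HasInducedCopy {V W : Type} (G : SimpleGraph V) (H : SimpleGraph W) : Prop :=
  ∃ f : W → V, Function.Injective f ∧ ∀ i j : W, G.Adj (f i) (f j) ↔ H.Adj i j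

/-- The paw graph: a triangle 0-1-2 with the pendant edge 2-3. -/
def pawGraph : SimpleGraph (Fin 4) :=
  SimpleGraph.fromRel (fun i j =>
    (i = 0 ∧ j = 1) ∨ (i = 0 ∧ j = 2) ∨ (i = 1 ∧ j = 2) ∨ (i = 2 ∧ j = 3))

/-- The disjoint union of two edges, on four vertices. -/
def twoP2 : SimpleGraph (Fin 4) :=
  SimpleGraph.fromRel (fun i j => (i = 0 ∧ j = 1) ∨ (i = 2 ∧ j = 3))

/-!
A graph is complete multipartite iff non-adjacency is transitive, i.e. iff it has no three
vertices `v, u, w` spanning the single edge `uw`. Each of P₄, the paw and 2P₂ contains such a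
triple, and this property passes to any graph containing them as induced subgraphs. Conversely,
given such a triple in a connected graph, walk from `v` towards `u`: the first vertex `x` on the
walk adjacent to `u` or `w` yields, together with its predecessor, an induced P₄ or paw.
-/

section

open SimpleGraph

variable {V W : Type} {G : SimpleGraph V} {H : SimpleGraph W}

theorem isCompleteMultipartite_iff_graph_isCompleteMultipartite :
    _root_.IsCompleteMultipartite G ↔ G.IsCompleteMultipartite := by
  constructor
  · rintro ⟨ι, p, hp⟩
    refine ⟨fun u v w huv hvw => ?_⟩
    rw [hp, not_not] at huv hvw ⊢
    exact huv.trans hvw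
  · intro hG
    refine ⟨Quotient hG.setoid, Quotient.mk _, fun u v => ?_⟩
    rw [Ne, Quotient.eq]
    exact not_not.symm

theorem HasInducedCopy.isCompleteMultipartite (hGH : HasInducedCopy G H)
    (hG : G.IsCompleteMultipartite) : H.IsCompleteMultipartite :=
  let ⟨f, hf, hadj⟩ := hGH
  hG.comap ⟨⟨f, hf⟩, hadj _ _⟩

/-- A map preserving and reflecting adjacency can only identify vertices with equal
neighbourhoods. -/
theorem hasInducedCopy_of_adj_iff (hH : ∀ i j, (∀ k, H.Adj i k ↔ H.Adj j k) → i = j)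
    (f : W → V) (hf : ∀ i j, G.Adj (f i) (f j) ↔ H.Adj i j) : HasInducedCopy G H :=
  ⟨f, fun i j hij => hH i j fun k => by rw [← hf, ← hf, hij], hf⟩

theorem hasInducedCopy_pathGraph_four {a b c d : V} (hab : G.Adj a b) (hbc : G.Adj b c)
    (hcd : G.Adj c d) (hac : ¬ G.Adj a c) (hbd : ¬ G.Adj b d) (had : ¬ G.Adj a d) :
    HasInducedCopy G (pathGraph 4) := by
  refine hasInducedCopy_of_adj_iff (by simp only [pathGraph_adj]; decide) ![a, b, c, d] ?_
  intro i j
  fin_cases i <;> fin_cases j <;>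
    simp [pathGraph_adj, hab, hbc, hcd, hab.symm, hbc.symm, hcd.symm, hac, hbd, had,
      mt Adj.symm hac, mt Adj.symm hbd, mt Adj.symm had]

theorem hasInducedCopy_pawGraph {a b c d : V} (hab : G.Adj a b) (hac : G.Adj a c)
    (hbc : G.Adj b c) (hcd : G.Adj c d) (had : ¬ G.Adj a d) (hbd : ¬ G.Adj b d) :
    HasInducedCopy G pawGraph := by
  refine hasInducedCopy_of_adj_iff (by simp only [pawGraph, fromRel_adj]; decide)
    ![a, b, c, d] ?_
  intro i j
  fin_cases i <;> fin_cases j <;>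
    simp [pawGraph, hab, hac, hbc, hcd, hab.symm, hac.symm, hbc.symm, hcd.symm, had, hbd,
      mt Adj.symm had, mt Adj.symm hbd]

theorem SimpleGraph.IsPathGraph3Compl.hasInducedCopy_pathGraph_four_or_pawGraph {v u w : V}
    (h : G.IsPathGraph3Compl v u w) (hvu : G.Reachable v u) :
    HasInducedCopy G (pathGraph 4) ∨ HasInducedCopy G pawGraph := by
  obtain ⟨p⟩ := hvu
  induction p with
  | nil => exact absurd rfl h.ne_fst
  | @cons v x u hvx _ ih =>
    by_cases hxu : G.Adj x u <;> by_cases hxw : G.Adj x w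
    · exact .inr <| hasInducedCopy_pawGraph h.adj hxu.symm hxw.symm hvx.symm
        (h.not_adj_fst <| ·.symm) (h.not_adj_snd <| ·.symm)
    · exact .inl <| hasInducedCopy_pathGraph_four hvx hxu h.adj h.not_adj_fst hxw h.not_adj_snd
    · exact .inl <| hasInducedCopy_pathGraph_four hvx hxw h.adj.symm h.not_adj_snd hxu
        h.not_adj_fst
    · exact ih ⟨h.adj, hxu, hxw⟩

theorem not_isCompleteMultipartite_pathGraph {n : ℕ} (hn : 4 ≤ n) :
    ¬ (pathGraph n).IsCompleteMultipartite :=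
  not_isCompleteMultipartite_iff_exists_isPathGraph3Compl.2
    ⟨⟨0, by omega⟩, ⟨2, by omega⟩, ⟨3, by omega⟩,
      by simp [pathGraph_adj], by simp [pathGraph_adj], by simp [pathGraph_adj]⟩

theorem not_isCompleteMultipartite_pawGraph : ¬ pawGraph.IsCompleteMultipartite :=
  not_isCompleteMultipartite_iff_exists_isPathGraph3Compl.2
    ⟨3, 0, 1, by simp [pawGraph], by simp [pawGraph], by simp [pawGraph]⟩

theorem not_isCompleteMultipartite_twoP2 : ¬ twoP2.IsCompleteMultipartite :=
  not_isCompleteMultipartite_iff_exists_isPathGraph3Compl.2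
    ⟨0, 2, 3, by simp [twoP2], by simp [twoP2], by simp [twoP2]⟩

end

/-- A connected graph is not complete multipartite iff it contains an induced
P4, an induced paw, or an induced disjoint union of two edges. -/
theorem not_completeMultipartite_iff
    {V : Type} (G : SimpleGraph V) (hconn : G.Connected) :
    ¬ IsCompleteMultipartite G ↔
      (HasInducedCopy G (SimpleGraph.pathGraph 4) ∨
       HasInducedCopy G pawGraph ∨
       HasInducedCopy G twoP2) := by
  rw [isCompleteMultipartite_iff_graph_isCompleteMultipartite]
  constructor
  · intro hG
    obtain ⟨v, u, w, h⟩ := G.exists_isPathGraph3Compl_of_not_isCompleteMultipartite hG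
    exact (h.hasInducedCopy_pathGraph_four_or_pawGraph (hconn.preconnected v u)).imp_right .inl
  · rintro (h | h | h) hG
    · exact not_isCompleteMultipartite_pathGraph le_rfl (h.isCompleteMultipartite hG)
    · exact not_isCompleteMultipartite_pawGraph (h.isCompleteMultipartite hG)
    · exact not_isCompleteMultipartite_twoP2 (h.isCompleteMultipartite hG)
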